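/- Let φ : ℝ^n → ℝ be C-semiconcave and κ-Lipschitz, H a Tonelli Hamiltonian with Lagrangian L, and p a Borel measurable selection of D⁺φ. Suppose a Lipschitz curve γ : [0,T] → ℝ^n satisfies the maximal slope identity φ(γ(t₂)) − φ(γ(t₁)) = ∫_{t₁}^{t₂} [ L(γ(s),γ'(s)) + H(γ(s), p(γ(s))) ] ds for all 0 ≤ t₁ ≤ t₂ ≤ T. Then H(γ(s), p(γ(s))) = H(γ(s), p♯(γ(s))) for almost every s ∈ [0,T], and γ is a strict singular characteristic for (φ,H), i.e. γ'(s) = H_p(γ(s), p♯(γ(s))) for almost every s ∈ [0,T]. -/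

import Mathlib

open MeasureTheory Set Filter Topology intervalIntegral
open scoped RealInnerProductSpace NNReal

noncomputable section

abbrev E (n : ℕ) := EuclideanSpace ℝ (Fin n)

variable {n : ℕ}

/-- `φ` is semiconcave with linear modulus and constant `C`. -/
def Semiconcave (C : ℝ) (φ : E n → ℝ) : Prop :=
  ConcaveOn ℝ Set.univ (fun x => φ x - C / 2 * ‖x‖ ^ 2)

/-- The superdifferential of `φ` at `x`. -/
def superdiff (φ : E n → ℝ) (x : E n) : Set (E n) :=
  {p | ∀ ε > 0, ∀ᶠ y in 𝓝 x, φ y - φ x - ⟪p, y - x⟫ ≤ ε * ‖y - x‖}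

/-- Tonelli Hamiltonian. -/
structure IsTonelli (H : E n → E n → ℝ) : Prop where
  smooth : ContDiff ℝ 2 (fun q : E n × E n => H q.1 q.2)
  posdef : ∀ x p v : E n, v ≠ 0 → 0 < iteratedFDeriv ℝ 2 (H x) p ![v, v]
  superlinear : ∀ A : ℝ, 0 ≤ A → ∃ B : ℝ, ∀ x p, A * ‖p‖ - B ≤ H x p

/-- The Tonelli Lagrangian associated to `H` via the Fenchel transform. -/
def Lag (H : E n → E n → ℝ) (x v : E n) : ℝ := ⨆ p : E n, (⟪p, v⟫ - H x p)

/-- Partial gradient of `H` in the momentum variable. -/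
def Hp (H : E n → E n → ℝ) (x p : E n) : E n := gradient (H x) p

/-- `ps` is the minimal energy selection of `D⁺φ` for the pair `(φ, H)`. -/
def MinSel (φ : E n → ℝ) (H : E n → E n → ℝ) (ps : E n → E n) : Prop :=
  ∀ x, ps x ∈ superdiff φ x ∧ ∀ q ∈ superdiff φ x, H x (ps x) ≤ H x q

/-!
By the Lebesgue differentiation theorem, at almost every time `φ ∘ γ` is differentiable with
derivative `L(γ, γ') + H(γ, p(γ))`; the integrand is bounded because `|γ'| ≤ K` and `D⁺φ` lies in
the ball of radius `κ`. Semiconcavity gives `φ y ≤ φ x + ⟪q, y - x⟫ + C/2 ‖y - x‖²` for every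
`q ∈ D⁺φ(x)`, so at a time where `γ` is also differentiable every supergradient `q` of `φ` at `γ`
satisfies `(φ ∘ γ)' = ⟪q, γ'⟫`. With `q = p♯(γ)` and the Fenchel–Young inequality this yields
`L(γ, γ') + H(γ, p(γ)) = ⟪p♯, γ'⟫ ≤ L(γ, γ') + H(γ, p♯(γ))`, the reverse of minimality of `p♯`.
Hence equality holds, the Fenchel supremum defining `L(γ, γ')` is attained at `p♯`, and the
first-order condition there reads `γ' = H_p(γ, p♯)`.
-/

lemma norm_sq_sub_norm_sq_sub_two_inner {F : Type*} [NormedAddCommGroup F]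
    [InnerProductSpace ℝ F] (x y : F) : ‖y‖ ^ 2 - ‖x‖ ^ 2 - 2 * ⟪x, y - x⟫ = ‖y - x‖ ^ 2 := by
  rw [norm_sub_sq_real, inner_sub_right, real_inner_self_eq_norm_sq, real_inner_comm]; ring

section Superdifferential

variable {φ : E n → ℝ} {x q : E n}

lemma eventually_le_of_mem_superdiff (hq : q ∈ superdiff φ x) (w : E n) {ε : ℝ} (hε : 0 < ε) :
    ∀ᶠ t in 𝓝[>] (0 : ℝ), φ (x + t • w) ≤ φ x + t * (⟪q, w⟫ + ε) := by
  have hline : Tendsto (fun t : ℝ => x + t • w) (𝓝[>] 0) (𝓝 x) :=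
    (Continuous.tendsto' (by fun_prop) 0 x (by simp)).mono_left nhdsWithin_le_nhds
  have hε' : 0 < ε / (‖w‖ + 1) := by positivity
  filter_upwards [hline.eventually (hq _ hε'), self_mem_nhdsWithin] with t ht (htpos : 0 < t)
  have hslope : ε / (‖w‖ + 1) * ‖w‖ ≤ ε := by
    rw [div_mul_eq_mul_div, div_le_iff₀ (by positivity)]
    nlinarith [norm_nonneg w]
  rw [add_sub_cancel_left, inner_smul_right, norm_smul, Real.norm_of_nonneg htpos.le] at ht
  nlinarith

lemma norm_le_of_mem_superdiff {κ : ℝ≥0} (hφ : LipschitzWith κ φ) (hq : q ∈ superdiff φ x) :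
    ‖q‖ ≤ κ := by
  have hsq : ‖q‖ ^ 2 ≤ κ * ‖q‖ := by
    refine le_of_forall_pos_le_add fun ε hε => ?_
    obtain ⟨t, ht, htpos : 0 < t⟩ :=
      ((eventually_le_of_mem_superdiff hq (-q) hε).and self_mem_nhdsWithin).exists
    have hlip : φ x - φ (x + t • -q) ≤ κ * (t * ‖q‖) := by
      have h := hφ.dist_le_mul x (x + t • -q)
      rw [Real.dist_eq, dist_self_add_right, norm_smul, norm_neg,
        Real.norm_of_nonneg htpos.le] at h
      exact (abs_le.mp h).2
    rw [inner_neg_right, real_inner_self_eq_norm_sq] at ht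
    nlinarith
  rcases (norm_nonneg q).eq_or_lt with h | h
  · rw [← h]; exact κ.coe_nonneg
  · nlinarith

lemma mem_superdiff_sub_sq (C : ℝ) (hq : q ∈ superdiff φ x) :
    q - C • x ∈ superdiff (fun y => φ y - C / 2 * ‖y‖ ^ 2) x := by
  intro ε hε
  have hnear : ∀ᶠ y in 𝓝 x, |C| / 2 * ‖y - x‖ ≤ ε / 2 := by
    have : Tendsto (fun y => |C| / 2 * ‖y - x‖) (𝓝 x) (𝓝 0) := by
      simpa using (tendsto_norm_sub_self x).const_mul (|C| / 2)
    exact this.eventually (ge_mem_nhds (by positivity))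
  filter_upwards [hq (ε / 2) (by positivity), hnear] with y hy hy'
  have hCsq : -(C / 2) * ‖y - x‖ ^ 2 ≤ ε / 2 * ‖y - x‖ := by
    have := mul_le_mul_of_nonneg_right hy' (norm_nonneg (y - x))
    nlinarith [neg_abs_le C, norm_nonneg (y - x), sq_nonneg ‖y - x‖]
  have hsplit : φ y - C / 2 * ‖y‖ ^ 2 - (φ x - C / 2 * ‖x‖ ^ 2) - ⟪q - C • x, y - x⟫ =
      φ y - φ x - ⟪q, y - x⟫ - C / 2 * ‖y - x‖ ^ 2 := by
    rw [← norm_sq_sub_norm_sq_sub_two_inner, inner_sub_left, real_inner_smul_left]; ring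
  linarith

lemma ConcaveOn.le_of_mem_superdiff (hφ : ConcaveOn ℝ univ φ) (hq : q ∈ superdiff φ x)
    (y : E n) : φ y ≤ φ x + ⟪q, y - x⟫ := by
  refine le_of_forall_pos_le_add fun ε hε => ?_
  obtain ⟨t, ht, htpos, ht1⟩ :=
    ((eventually_le_of_mem_superdiff hq (y - x) hε).and (Ioc_mem_nhdsGT one_pos)).exists
  have hconc := hφ.2 (mem_univ x) (mem_univ y) (by linarith : 0 ≤ 1 - t) htpos.le (by ring)
  have hpt : (1 - t) • x + t • y = x + t • (y - x) := by
    rw [smul_sub, sub_smul, one_smul]; abel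
  rw [hpt, smul_eq_mul, smul_eq_mul] at hconc
  nlinarith

end Superdifferential

namespace Semiconcave

variable {C : ℝ} {φ : E n → ℝ}

lemma le_of_mem_superdiff (hφ : Semiconcave C φ) {x q : E n} (hq : q ∈ superdiff φ x)
    (y : E n) : φ y ≤ φ x + ⟪q, y - x⟫ + C / 2 * ‖y - x‖ ^ 2 := by
  have h := ConcaveOn.le_of_mem_superdiff hφ (mem_superdiff_sub_sq C hq) y
  rw [inner_sub_left, real_inner_smul_left] at h
  linear_combination h + C / 2 * norm_sq_sub_norm_sq_sub_two_inner x y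

lemma hasDerivAt_comp_eq_inner (hφ : Semiconcave C φ) {g : ℝ → E n} {s d : ℝ} {v : E n}
    (hg : HasDerivAt g v s) (hφg : HasDerivAt (fun t => φ (g t)) d s)
    {q : E n} (hq : q ∈ superdiff φ (g s)) : d = ⟪q, v⟫ := by
  have hmax : IsLocalMax (fun t => φ (g t) - ⟪q, g t - g s⟫ - C / 2 * ‖g t - g s‖ ^ 2) s :=
    Eventually.of_forall fun t => by
      simp only [sub_self, inner_zero_right, norm_zero]
      linarith [hφ.le_of_mem_superdiff hq (g t)]
  have hgs : HasDerivAt (fun t => g t - g s) v s := hg.sub_const (g s)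
  have hsq : HasDerivAt (fun t => ‖g t - g s‖ ^ 2) 0 s := by
    simpa using hgs.norm_sq
  have h := hmax.hasDerivAt_eq_zero
    ((hφg.sub ((hasDerivAt_const s q).inner ℝ hgs)).sub (hsq.const_mul (C / 2)))
  simp only [inner_zero_left, mul_zero, sub_zero] at h
  linarith

end Semiconcave

section RealLine

variable {F : Type*} [NormedAddCommGroup F] [NormedSpace ℝ F]

lemma ae_restrict_Icc_mem_Ioo (a b : ℝ) : ∀ᵐ s ∂volume.restrict (Icc a b), s ∈ Ioo a b := by
  rw [← Measure.restrict_congr_set Ioo_ae_eq_Icc]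
  exact ae_restrict_mem measurableSet_Ioo

lemma derivWithin_Icc_ae_eq_deriv (f : ℝ → F) (a b : ℝ) :
    derivWithin f (Icc a b) =ᵐ[volume.restrict (Icc a b)] deriv f := by
  filter_upwards [ae_restrict_Icc_mem_Ioo a b] with s hs
  exact derivWithin_of_mem_nhds (Icc_mem_nhds hs.1 hs.2)

lemma LipschitzOnWith.ae_norm_derivWithin_Icc_le {f : ℝ → F} {a b : ℝ} {K : ℝ≥0}
    (hf : LipschitzOnWith K f (Icc a b)) :
    ∀ᵐ s ∂volume.restrict (Icc a b), ‖derivWithin f (Icc a b) s‖ ≤ K := by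
  filter_upwards [ae_restrict_Icc_mem_Ioo a b, derivWithin_Icc_ae_eq_deriv f a b] with s hs hs'
  rw [hs']
  exact norm_deriv_le_of_lipschitzOn (Icc_mem_nhds hs.1 hs.2) hf

lemma ae_hasDerivAt_of_sub_eq_integral [CompleteSpace F] {f g : ℝ → F} {a b : ℝ}
    (hg : IntegrableOn g (Icc a b))
    (hfg : ∀ t₁ t₂, a ≤ t₁ → t₁ ≤ t₂ → t₂ ≤ b → f t₂ - f t₁ = ∫ s in t₁..t₂, g s) :
    ∀ᵐ s ∂volume.restrict (Icc a b), HasDerivAt f (g s) s := by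
  rcases lt_or_ge b a with hba | hab
  · simp [Icc_eq_empty_of_lt hba]
  have hint : IntervalIntegrable g volume a b :=
    (intervalIntegrable_iff_integrableOn_Icc_of_le hab).2 hg
  filter_upwards [ae_restrict_of_ae hint.ae_hasDerivAt_integral, ae_restrict_Icc_mem_Ioo a b]
    with s hs hsIoo
  have hIcc : Icc a b ∈ 𝓝 s := Icc_mem_nhds hsIoo.1 hsIoo.2
  have hsI : s ∈ uIcc a b := by rw [uIcc_of_le hab]; exact Ioo_subset_Icc_self hsIoo
  refine ((hs hsI a left_mem_uIcc).const_add (f a)).congr_of_eventuallyEq ?_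
  filter_upwards [hIcc] with t ht
  rw [← hfg a t le_rfl ht.1 ht.2, add_sub_cancel]

end RealLine

lemma lag_le_of_norm_le {H : E n → E n → ℝ} {x v : E n} {A B : ℝ}
    (hB : ∀ p, A * ‖p‖ - B ≤ H x p) (hv : ‖v‖ ≤ A) : Lag H x v ≤ B :=
  ciSup_le fun p => by nlinarith [real_inner_le_norm p v, hB p, norm_nonneg p]

namespace IsTonelli

variable {H : E n → E n → ℝ}

lemma continuous_uncurry (hH : IsTonelli H) : Continuous (fun z : E n × E n => H z.1 z.2) :=
  hH.smooth.continuous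

lemma bddAbove_range_lag (hH : IsTonelli H) (x v : E n) :
    BddAbove (range fun p : E n => ⟪p, v⟫ - H x p) := by
  obtain ⟨B, hB⟩ := hH.superlinear ‖v‖ (norm_nonneg v)
  refine ⟨B, forall_mem_range.2 fun p => ?_⟩
  nlinarith [real_inner_le_norm p v, hB x p, norm_nonneg p]

lemma inner_sub_le_lag (hH : IsTonelli H) (x v p : E n) : ⟪p, v⟫ - H x p ≤ Lag H x v :=
  le_ciSup (hH.bddAbove_range_lag x v) p

lemma measurable_lag (hH : IsTonelli H) : Measurable (fun z : E n × E n => Lag H z.1 z.2) := by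
  refine LowerSemicontinuous.measurable
    (lowerSemicontinuous_ciSup (fun z => hH.bddAbove_range_lag z.1 z.2) fun p => ?_)
  exact (continuous_const.inner continuous_snd).sub
    (hH.continuous_uncurry.comp (continuous_fst.prodMk continuous_const)) |>.lowerSemicontinuous

lemma hp_eq_of_lag_eq (hH : IsTonelli H) {x v p : E n} (hp : Lag H x v = ⟪p, v⟫ - H x p) :
    Hp H x p = v := by
  have hmax : IsLocalMax (fun p' => ⟪v, p'⟫ - H x p') p :=
    Eventually.of_forall fun p' => by
      simpa only [real_inner_comm v, hp] using hH.inner_sub_le_lag x v p'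
  have hdiff : DifferentiableAt ℝ (H x) p :=
    (hH.smooth.comp (contDiff_const.prodMk contDiff_id)).differentiable (by norm_num) p
  have h := hmax.hasFDerivAt_eq_zero ((innerSL ℝ v).hasFDerivAt.sub hdiff.hasFDerivAt)
  rw [sub_eq_zero] at h
  rw [Hp, gradient, ← h]
  exact (InnerProductSpace.toDual ℝ (E n)).symm_apply_eq.2 rfl

lemma exists_abs_lag_add_le (hH : IsTonelli H) {S : Set (E n)} (hS : IsCompact S) (A R : ℝ) :
    ∃ M, ∀ x ∈ S, ∀ v p : E n, ‖v‖ ≤ A → ‖p‖ ≤ R → |Lag H x v + H x p| ≤ M := by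
  obtain ⟨B, hB⟩ := hH.superlinear |A| (abs_nonneg A)
  obtain ⟨M, hM⟩ := (hS.prod (isCompact_closedBall (0 : E n) R)).exists_bound_of_continuousOn
    hH.continuous_uncurry.continuousOn
  refine ⟨|B| + 2 * M, fun x hx v p hv hp => ?_⟩
  have hHx : ∀ p' : E n, ‖p'‖ ≤ R → |H x p'| ≤ M := fun p' hp' =>
    hM (x, p') ⟨hx, mem_closedBall_zero_iff.2 hp'⟩
  have hp₀ := abs_le.1 (hHx 0 (by simpa using (norm_nonneg p).trans hp))
  have hp₁ := abs_le.1 (hHx p hp)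
  have hlow := hH.inner_sub_le_lag x v 0
  have hup := lag_le_of_norm_le (fun p' => hB x p') (hv.trans (le_abs_self A))
  rw [inner_zero_left, zero_sub] at hlow
  exact abs_le.2 ⟨by linarith [abs_nonneg B], by linarith [le_abs_self B]⟩

lemma integrable_lag_add (hH : IsTonelli H) {α : Type*} [MeasurableSpace α] {μ : Measure α}
    [IsFiniteMeasure μ] {S : Set (E n)} (hS : IsCompact S) {γ v p : α → E n}
    (hγ : AEMeasurable γ μ) (hγS : ∀ᵐ t ∂μ, γ t ∈ S) (hv : AEMeasurable v μ) {A R : ℝ}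
    (hvA : ∀ᵐ t ∂μ, ‖v t‖ ≤ A) (hp : AEMeasurable p μ) (hpR : ∀ᵐ t ∂μ, ‖p t‖ ≤ R) :
    Integrable (fun t => Lag H (γ t) (v t) + H (γ t) (p t)) μ := by
  obtain ⟨M, hM⟩ := hH.exists_abs_lag_add_le hS A R
  refine Integrable.of_bound (AEMeasurable.aestronglyMeasurable ?_) M ?_
  · exact (hH.measurable_lag.comp_aemeasurable (hγ.prodMk hv)).add
      (hH.continuous_uncurry.measurable.comp_aemeasurable (hγ.prodMk hp))
  · filter_upwards [hγS, hvA, hpR] with t hγt hvt hpt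
    exact hM _ hγt _ _ hvt hpt

lemma eq_and_eq_hp_of_lag_add_eq (hH : IsTonelli H) {x v p p' : E n}
    (h : Lag H x v + H x p = ⟪p', v⟫) (hmin : H x p' ≤ H x p) :
    H x p = H x p' ∧ v = Hp H x p' := by
  have hfenchel := hH.inner_sub_le_lag x v p'
  exact ⟨le_antisymm (by linarith) hmin, (hH.hp_eq_of_lag_eq (by linarith)).symm⟩

end IsTonelli

theorem stmt4_general (C : ℝ) (κ : ℝ≥0) (φ : E n → ℝ)
    (hφ : Semiconcave C φ) (hφLip : LipschitzWith κ φ)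
    (H : E n → E n → ℝ) (hH : IsTonelli H)
    (pSel : E n → E n) (hmeas : Measurable pSel) (hsel : ∀ x, pSel x ∈ superdiff φ x)
    (ps : E n → E n) (hps : MinSel φ H ps)
    (T : ℝ) (γ : ℝ → E n) (K : ℝ≥0)
    (hγ : LipschitzOnWith K γ (Set.Icc 0 T))
    (hms : ∀ t₁ t₂ : ℝ, 0 ≤ t₁ → t₁ ≤ t₂ → t₂ ≤ T →
      φ (γ t₂) - φ (γ t₁) =
        ∫ s in t₁..t₂,
          (Lag H (γ s) (derivWithin γ (Set.Icc 0 T) s) + H (γ s) (pSel (γ s)))) :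
    ∀ᵐ s ∂(volume.restrict (Set.Icc 0 T)),
      H (γ s) (pSel (γ s)) = H (γ s) (ps (γ s)) ∧
      derivWithin γ (Set.Icc 0 T) s = Hp H (γ s) (ps (γ s)) := by
  have hγm : AEMeasurable γ (volume.restrict (Icc 0 T)) :=
    hγ.continuousOn.aemeasurable measurableSet_Icc
  have hint : IntegrableOn
      (fun s => Lag H (γ s) (derivWithin γ (Icc 0 T) s) + H (γ s) (pSel (γ s))) (Icc 0 T) :=
    hH.integrable_lag_add (isCompact_Icc.image_of_continuousOn hγ.continuousOn) hγm
      (ae_restrict_of_forall_mem measurableSet_Icc fun s hs => mem_image_of_mem γ hs)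
      ((measurable_deriv γ).aemeasurable.congr (derivWithin_Icc_ae_eq_deriv γ 0 T).symm)
      hγ.ae_norm_derivWithin_Icc_le (hmeas.comp_aemeasurable hγm)
      (Eventually.of_forall fun s => norm_le_of_mem_superdiff hφLip (hsel (γ s)))
  filter_upwards [ae_hasDerivAt_of_sub_eq_integral hint hms,
    hγ.ae_differentiableWithinAt_real measurableSet_Icc, ae_restrict_Icc_mem_Ioo 0 T]
    with s hφγ hγs hs
  have hv : HasDerivAt γ (derivWithin γ (Icc 0 T) s) s :=
    hγs.hasDerivWithinAt.hasDerivAt (Icc_mem_nhds hs.1 hs.2)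
  exact hH.eq_and_eq_hp_of_lag_add_eq (hφ.hasDerivAt_comp_eq_inner hv hφγ (hps (γ s)).1)
    ((hps (γ s)).2 _ (hsel (γ s)))

/-- A curve of maximal slope relative to any measurable selection of `D⁺φ` in fact
dissipates energy at the minimal rate, and is a strict singular characteristic. -/
theorem stmt4 (C : ℝ) (hC : 0 ≤ C) (κ : ℝ≥0) (φ : E n → ℝ)
    (hφ : Semiconcave C φ) (hφLip : LipschitzWith κ φ)
    (H : E n → E n → ℝ) (hH : IsTonelli H)
    (pSel : E n → E n) (hmeas : Measurable pSel) (hsel : ∀ x, pSel x ∈ superdiff φ x)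
    (ps : E n → E n) (hps : MinSel φ H ps)
    (T : ℝ) (hT : 0 < T) (γ : ℝ → E n) (K : ℝ≥0)
    (hγ : LipschitzOnWith K γ (Set.Icc 0 T))
    (hms : ∀ t₁ t₂ : ℝ, 0 ≤ t₁ → t₁ ≤ t₂ → t₂ ≤ T →
      φ (γ t₂) - φ (γ t₁) =
        ∫ s in t₁..t₂,
          (Lag H (γ s) (derivWithin γ (Set.Icc 0 T) s) + H (γ s) (pSel (γ s)))) :
    ∀ᵐ s ∂(volume.restrict (Set.Icc 0 T)),
      H (γ s) (pSel (γ s)) = H (γ s) (ps (γ s)) ∧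
      derivWithin γ (Set.Icc 0 T) s = Hp H (γ s) (ps (γ s)) :=
  stmt4_general C κ φ hφ hφLip H hH pSel hmeas hsel ps hps T γ K hγ hms

end
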